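/- Fix an index i with 1 ≤ i ≤ k, and suppose the integer matrices (d_{lj}) (1 ≤ l ≤ s, 1 ≤ j ≤ k) and (m_{jt}) (k+1 ≤ j ≤ r, 1 ≤ t ≤ k) satisfy ∑_{l=1}^s d_{li} d_{lv} − ∑_{u=k+1}^r m_{ui} m_{uv} = 0 for all v ≠ i, and ∑_{l=1}^s d_{li}² − ∑_{u=k+1}^r m_{ui}² − 1 = 0. Then the meromorphic function F(q₁,…,q_k) = ∏_{l=1}^s θ(∑_j d_{lj} q_j, τ) / (∏_{i'=1}^k θ(q_{i'}, τ) · ∏_{j=k+1}^r θ(∑_t m_{jt} q_t, τ)) satisfies F(q₁,…,q_i + 1,…,q_k) = F(q₁,…,q_k) and F(q₁,…,q_i + τ,…,q_k) = F(q₁,…,q_k), wherever both sides are defined (i.e., where the denominator is nonzero). -/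

import Mathlib

noncomputable section

/-- `πC` is the real number `π` viewed as a complex number. -/
def πC : ℂ := Real.pi

/-- The nome `q = e^{2πiτ}`. -/
def nome (τ : ℂ) : ℂ := Complex.exp (2 * πC * Complex.I * τ)

/-- The Jacobi theta function
`θ(v,τ) = 2 q^{1/8} sin(πv) ∏_{j=1}^∞ (1−q^j)(1−e^{2πiv}q^j)(1−e^{−2πiv}q^j)`,
where `q^{1/8} = e^{πiτ/4}`. -/
def jacobiθ (τ v : ℂ) : ℂ :=
  2 * Complex.exp (πC * Complex.I * τ / 4) * Complex.sin (πC * v) *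
    ∏' j : ℕ,
      ((1 - nome τ ^ (j + 1)) *
       (1 - Complex.exp (2 * πC * Complex.I * v) * nome τ ^ (j + 1)) *
       (1 - Complex.exp (-(2 * πC * Complex.I * v)) * nome τ ^ (j + 1)))

/-! `θ` is antiperiodic under `v ↦ v + 1`, and so is `h v = exp (πi v² / τ) θ v` under `v ↦ v + τ`.
Shifting `Q_i` by the period of an antiperiodic `f` multiplies each factor `f ⟨c, Q⟩` of the
quotient by `(-1)^{c_i}`; these signs cancel because `∑ d_{li}² = 1 + ∑ m_{ui}²` forces
`∑ d_{li} ≡ 1 + ∑ m_{ui}` mod 2. For the shift by `τ`, `F` is `exp (-πi R(Q) / τ)` times the same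
quotient built from `h`, where `R = ∑_l ⟨d_l, Q⟩² - ∑_j Q_j² - ∑_u ⟨m_u, Q⟩²`; the two string
conditions say exactly that the `i`-th row of the Gram matrix of `R` vanishes, so `R` is invariant
under `Q_i ↦ Q_i + e`. -/

open Complex Finset Function

theorem Int.prod_negOnePow {ι : Type*} (s : Finset ι) (n : ι → ℤ) :
    ∏ a ∈ s, (n a).negOnePow = (∑ a ∈ s, n a).negOnePow := by
  classical
  induction s using Finset.induction_on with
  | empty => simp
  | insert a s ha ih => rw [prod_insert ha, sum_insert ha, ih, Int.negOnePow_add]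

theorem Int.negOnePow_sum_mul_self {ι : Type*} (s : Finset ι) (n : ι → ℤ) :
    (∑ a ∈ s, n a * n a).negOnePow = (∑ a ∈ s, n a).negOnePow := by
  simp only [← Int.prod_negOnePow, Int.negOnePow_mul_self]

theorem Int.negOnePow_sum_eq_of_sum_mul_self_eq {ι ι' : Type*} [Fintype ι] [Fintype ι']
    {n : ι → ℤ} {n' : ι' → ℤ} (h : ∑ a, n a * n a = ∑ b, n' b * n' b) :
    (∑ a, n a).negOnePow = (∑ b, n' b).negOnePow := by
  rw [← Int.negOnePow_sum_mul_self, h, Int.negOnePow_sum_mul_self]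

section

variable {ι ι' κ : Type*} [Fintype ι] [Fintype ι'] [Fintype κ]

/-- For `f = θ`, `c = d` and `c'` the rows of the identity matrix followed by those of `m`,
this is the integrand `F`. -/
def prodLinearFormQuotient (f : ℂ → ℂ) (c : ι → κ → ℤ) (c' : ι' → κ → ℤ) (Q : κ → ℂ) : ℂ :=
  (∏ a, f (∑ j, (c a j : ℂ) * Q j)) / ∏ b, f (∑ j, (c' b j : ℂ) * Q j)

def sqLinearFormDiff (c : ι → κ → ℤ) (c' : ι' → κ → ℤ) (Q : κ → ℂ) : ℂ :=
  ∑ a, (∑ j, (c a j : ℂ) * Q j) ^ 2 - ∑ b, (∑ j, (c' b j : ℂ) * Q j) ^ 2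

theorem sum_intCast_mul_sum_intCast_mul (e : ι → κ → ℤ) (i : κ) (Q : κ → ℂ) :
    ∑ a, (e a i : ℂ) * ∑ j, (e a j : ℂ) * Q j = ∑ j, ((∑ a, e a i * e a j : ℤ) : ℂ) * Q j := by
  simp only [mul_sum, Int.cast_sum, Int.cast_mul, sum_mul, mul_assoc]
  exact sum_comm

theorem prodLinearFormQuotient_eq_exp_mul {f g : ℂ → ℂ} {μ : ℂ}
    (hfg : ∀ v, f v = exp (μ * v ^ 2) * g v) (c : ι → κ → ℤ) (c' : ι' → κ → ℤ) (Q : κ → ℂ) :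
    prodLinearFormQuotient f c c' Q =
      exp (μ * sqLinearFormDiff c c' Q) * prodLinearFormQuotient g c c' Q := by
  simp only [prodLinearFormQuotient, sqLinearFormDiff, hfg, prod_mul_distrib, ← exp_sum,
    mul_div_mul_comm, mul_sub, exp_sub, mul_sum]

variable [DecidableEq κ]

theorem sum_intCast_mul_update_add (c : κ → ℤ) (Q : κ → ℂ) (i : κ) (e : ℂ) :
    ∑ j, (c j : ℂ) * update Q i (Q i + e) j = ∑ j, (c j : ℂ) * Q j + c i * e := by
  have : update Q i (Q i + e) = Q + Pi.single i e := by
    ext j; rcases eq_or_ne j i with rfl | h <;> simp [*]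
  simp [this, mul_add, sum_add_distrib, Pi.single_apply]

theorem prod_comp_sum_update_add_of_antiperiodic {f : ℂ → ℂ} {ω : ℂ} (hf : Antiperiodic f ω)
    (c : ι → κ → ℤ) (Q : κ → ℂ) (i : κ) :
    ∏ a, f (∑ j, (c a j : ℂ) * update Q i (Q i + ω) j) =
      ((∑ a, c a i).negOnePow : ℂ) * ∏ a, f (∑ j, (c a j : ℂ) * Q j) := by
  simp only [sum_intCast_mul_update_add, hf.add_int_mul_eq, prod_mul_distrib,
    ← Int.prod_negOnePow]
  push_cast
  rfl

theorem prodLinearFormQuotient_update_add_of_antiperiodic {f : ℂ → ℂ} {ω : ℂ}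
    (hf : Antiperiodic f ω) {c : ι → κ → ℤ} {c' : ι' → κ → ℤ} {i : κ}
    (hpar : (∑ a, c a i).negOnePow = (∑ b, c' b i).negOnePow) (Q : κ → ℂ) :
    prodLinearFormQuotient f c c' (update Q i (Q i + ω)) = prodLinearFormQuotient f c c' Q := by
  unfold prodLinearFormQuotient
  rw [prod_comp_sum_update_add_of_antiperiodic hf, prod_comp_sum_update_add_of_antiperiodic hf,
    hpar, mul_div_mul_left _ _ (Int.cast_ne_zero.mpr (Units.ne_zero _))]

theorem sqLinearFormDiff_update_add {c : ι → κ → ℤ} {c' : ι' → κ → ℤ} {i : κ}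
    (hcol : ∀ v, ∑ a, c a i * c a v = ∑ b, c' b i * c' b v) (Q : κ → ℂ) (e : ℂ) :
    sqLinearFormDiff c c' (update Q i (Q i + e)) = sqLinearFormDiff c c' Q := by
  have hdiag : ∑ a, (c a i : ℂ) ^ 2 = ∑ b, (c' b i : ℂ) ^ 2 := by
    simpa only [sq, Int.cast_sum, Int.cast_mul] using congrArg (Int.cast : ℤ → ℂ) (hcol i)
  have hlin : ∑ a, (c a i : ℂ) * ∑ j, (c a j : ℂ) * Q j =
      ∑ b, (c' b i : ℂ) * ∑ j, (c' b j : ℂ) * Q j := by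
    simp only [sum_intCast_mul_sum_intCast_mul, hcol]
  have hexpand : ∀ L x : ℂ, (L + x * e) ^ 2 = L ^ 2 + 2 * e * (x * L) + e ^ 2 * x ^ 2 :=
    fun _ _ ↦ by ring
  simp only [sqLinearFormDiff, sum_intCast_mul_update_add, hexpand, sum_add_distrib, ← mul_sum]
  linear_combination (2 * e) * hlin + e ^ 2 * hdiag

end

theorem norm_nome_lt_one {τ : ℂ} (hτ : 0 < τ.im) : ‖nome τ‖ < 1 :=
  UpperHalfPlane.norm_exp_two_pi_I_lt_one ⟨τ, hτ⟩

/-- The `q`-Pochhammer symbol `(a q; q)_∞`. -/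
def qPochhammer (a q : ℂ) : ℂ := ∏' j : ℕ, (1 - a * q ^ (j + 1))

theorem multipliable_one_sub_mul_pow_succ (a : ℂ) {q : ℂ} (hq : ‖q‖ < 1) :
    Multipliable fun j : ℕ ↦ 1 - a * q ^ (j + 1) := by
  simp_rw [sub_eq_add_neg]
  apply multipliable_one_add_of_summable
  simpa [norm_mul, norm_pow] using
    ((summable_nat_add_iff 1).mpr (summable_geometric_of_lt_one (norm_nonneg _) hq)).mul_left ‖a‖

theorem qPochhammer_eq_mul (a : ℂ) {q : ℂ} (hq : ‖q‖ < 1) :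
    qPochhammer a q = (1 - a * q) * qPochhammer (a * q) q := by
  rw [qPochhammer, tprod_eq_zero_mul' ?_]
  · simp only [qPochhammer, zero_add, pow_one]
    congr 1
    exact tprod_congr fun j ↦ by ring
  · simpa only [mul_assoc, ← pow_succ'] using multipliable_one_sub_mul_pow_succ (a * q) hq

theorem jacobiθ_eq_qPochhammer {τ : ℂ} (hτ : 0 < τ.im) (v : ℂ) :
    jacobiθ τ v = 2 * exp (πC * I * τ / 4) * sin (πC * v) *
      (qPochhammer 1 (nome τ) * qPochhammer (exp (2 * πC * I * v)) (nome τ) *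
        qPochhammer (exp (-(2 * πC * I * v))) (nome τ)) := by
  have hq := norm_nome_lt_one hτ
  have h1 : qPochhammer 1 (nome τ) = ∏' j : ℕ, (1 - nome τ ^ (j + 1)) := by
    simp only [qPochhammer, one_mul]
  rw [jacobiθ, h1, qPochhammer, qPochhammer,
    ← (ModularForm.multipliable_one_sub_pow hq).tprod_mul (multipliable_one_sub_mul_pow_succ _ hq),
    ← ((ModularForm.multipliable_one_sub_pow hq).mul
      (multipliable_one_sub_mul_pow_succ _ hq)).tprod_mul (multipliable_one_sub_mul_pow_succ _ hq)]

theorem jacobiθ_antiperiodic_one (τ : ℂ) : Antiperiodic (jacobiθ τ) 1 := by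
  intro v
  have hper : Periodic exp (2 * πC * I) := exp_periodic
  have hsin : sin (πC * v + πC) = -sin (πC * v) := sin_antiperiodic _
  simp only [jacobiθ, mul_add, mul_one, hsin, hper _, neg_add, hper.neg _]
  ring

theorem jacobiθ_add_τ {τ : ℂ} (hτ : 0 < τ.im) (v : ℂ) :
    jacobiθ τ (v + τ) = -exp (-(πC * I * τ) - 2 * πC * I * v) * jacobiθ τ v := by
  have hq := norm_nome_lt_one hτ
  have hsin : ∀ z, sin (πC * z) = (exp (-(πC * I * z)) - exp (πC * I * z)) * I / 2 := fun z ↦ by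
    rw [show -(πC * I * z) = -(πC * z) * I by ring, show πC * I * z = πC * z * I by ring]
    linear_combination two_sin (πC * z) / 2
  have hsq : ∀ z, exp (2 * πC * I * z) = exp (πC * I * z) ^ 2 := fun z ↦ by
    rw [← exp_nat_mul]; ring_nf
  have hnome : nome τ = exp (πC * I * τ) ^ 2 := hsq τ
  have hadd : exp (πC * I * (v + τ)) = exp (πC * I * v) * exp (πC * I * τ) := by
    rw [mul_add, exp_add]
  have hpre : exp (-(πC * I * τ) - 2 * πC * I * v) =
      (exp (πC * I * τ) * exp (πC * I * v) ^ 2)⁻¹ := by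
    rw [sub_eq_add_neg, ← neg_add, exp_neg, exp_add, hsq]
  have hq' : ‖exp (πC * I * τ) ^ 2‖ < 1 := hnome ▸ hq
  -- with `x = exp (πi v)` and `p = exp (πi τ)` the shift sends `x ↦ x p`; one factor of each
  -- Pochhammer symbol moves across, and the rest is the identity for `sin (π (v + τ))`
  rw [hpre, jacobiθ_eq_qPochhammer hτ, jacobiθ_eq_qPochhammer hτ]
  simp only [hsin, exp_neg, hsq, hadd, hnome]
  rw [qPochhammer_eq_mul (exp (πC * I * v) ^ 2) hq',
    qPochhammer_eq_mul ((exp (πC * I * v) * exp (πC * I * τ)) ^ 2)⁻¹ hq']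
  have h2 : ((exp (πC * I * v) * exp (πC * I * τ)) ^ 2)⁻¹ * exp (πC * I * τ) ^ 2 =
      (exp (πC * I * v) ^ 2)⁻¹ := by
    field_simp
  rw [h2]
  field_simp
  ring

theorem antiperiodic_exp_mul_sq_mul_jacobiθ {τ : ℂ} (hτ : 0 < τ.im) :
    Antiperiodic (fun v ↦ exp (πC * I / τ * v ^ 2) * jacobiθ τ v) τ := by
  intro v
  have hτ0 : τ ≠ 0 := by rintro rfl; simp at hτ
  dsimp only
  rw [jacobiθ_add_τ hτ, ← mul_assoc, mul_neg, ← exp_add, neg_mul]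
  congr 3
  field_simp
  ring

theorem prodLinearFormQuotient_jacobiθ_update_add_τ {ι ι' κ : Type*} [Fintype ι] [Fintype ι']
    [Fintype κ] [DecidableEq κ] {τ : ℂ} (hτ : 0 < τ.im) {c : ι → κ → ℤ} {c' : ι' → κ → ℤ} {i : κ}
    (hcol : ∀ v, ∑ a, c a i * c a v = ∑ b, c' b i * c' b v) (Q : κ → ℂ) :
    prodLinearFormQuotient (jacobiθ τ) c c' (update Q i (Q i + τ)) =
      prodLinearFormQuotient (jacobiθ τ) c c' Q := by
  have hgauge : ∀ v, jacobiθ τ v =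
      exp (-(πC * I / τ) * v ^ 2) * (exp (πC * I / τ * v ^ 2) * jacobiθ τ v) := fun v ↦ by
    rw [← mul_assoc, ← exp_add, neg_mul, neg_add_cancel, exp_zero, one_mul]
  rw [prodLinearFormQuotient_eq_exp_mul hgauge, prodLinearFormQuotient_eq_exp_mul hgauge,
    sqLinearFormDiff_update_add hcol, prodLinearFormQuotient_update_add_of_antiperiodic
      (antiperiodic_exp_mul_sq_mul_jacobiθ hτ) (Int.negOnePow_sum_eq_of_sum_mul_self_eq (hcol i))]

theorem ellipticity_of_witten_integrand_general (τ : ℂ) (hτ : 0 < τ.im)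
    (k r s : ℕ)
    (d : Fin s → Fin k → ℤ) (m : Fin (r - k) → Fin k → ℤ) (i : Fin k)
    (hcross : ∀ v : Fin k, v ≠ i →
      (∑ l, d l i * d l v) - (∑ u, m u i * m u v) = 0)
    (hsq : (∑ l, (d l i) ^ 2) - (∑ u, (m u i) ^ 2) - 1 = 0)
    (F : (Fin k → ℂ) → ℂ)
    (hF : ∀ Q : Fin k → ℂ,
      F Q = (∏ l, jacobiθ τ (∑ j, (d l j : ℂ) * Q j)) /
        ((∏ i' : Fin k, jacobiθ τ (Q i')) *
          ∏ j : Fin (r - k), jacobiθ τ (∑ t, (m j t : ℂ) * Q t)))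
    (Q : Fin k → ℂ) :
    F (Function.update Q i (Q i + 1)) = F Q ∧
    F (Function.update Q i (Q i + τ)) = F Q := by
  let c' : Fin k ⊕ Fin (r - k) → Fin k → ℤ := Sum.elim (fun i' ↦ Pi.single i' 1) m
  have hF' : F = prodLinearFormQuotient (jacobiθ τ) d c' := funext fun Q ↦ by
    simp [hF, prodLinearFormQuotient, c', Fintype.prod_sum_type, Pi.single_apply]
  have hcol : ∀ v, ∑ l, d l i * d l v = ∑ b, c' b i * c' b v := fun v ↦ by
    rcases eq_or_ne v i with rfl | hv
    · simp only [← sq] at hsq ⊢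
      simp [c', Fintype.sum_sum_type, Pi.single_apply]
      linarith
    · simp [c', Fintype.sum_sum_type, Pi.single_apply, Ne.symm hv]
      linarith [hcross v hv]
  subst hF'
  exact ⟨prodLinearFormQuotient_update_add_of_antiperiodic (jacobiθ_antiperiodic_one τ)
    (Int.negOnePow_sum_eq_of_sum_mul_self_eq (hcol i)) Q,
    prodLinearFormQuotient_jacobiθ_update_add_τ hτ hcol Q⟩

/-- Ellipticity of
`F(q) = ∏_l θ(∑_j d_{lj}q_j) / (∏_{i'} θ(q_{i'}) · ∏_j θ(∑_t m_{jt}q_t))`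
under the string conditions: `F` is invariant under `q_i ↦ q_i + 1` and
`q_i ↦ q_i + τ`, wherever the denominator is nonzero. -/
theorem ellipticity_of_witten_integrand (τ : ℂ) (hτ : 0 < τ.im)
    (k r s : ℕ) (hkr : k ≤ r)
    (d : Fin s → Fin k → ℤ) (m : Fin (r - k) → Fin k → ℤ) (i : Fin k)
    (hcross : ∀ v : Fin k, v ≠ i →
      (∑ l, d l i * d l v) - (∑ u, m u i * m u v) = 0)
    (hsq : (∑ l, (d l i) ^ 2) - (∑ u, (m u i) ^ 2) - 1 = 0)
    (F : (Fin k → ℂ) → ℂ)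
    (hF : ∀ Q : Fin k → ℂ,
      F Q = (∏ l, jacobiθ τ (∑ j, (d l j : ℂ) * Q j)) /
        ((∏ i' : Fin k, jacobiθ τ (Q i')) *
          ∏ j : Fin (r - k), jacobiθ τ (∑ t, (m j t : ℂ) * Q t)))
    (Q : Fin k → ℂ)
    (hden : (∏ i' : Fin k, jacobiθ τ (Q i')) *
        ∏ j : Fin (r - k), jacobiθ τ (∑ t, (m j t : ℂ) * Q t) ≠ 0)
    (hden1 : (∏ i' : Fin k, jacobiθ τ (Function.update Q i (Q i + 1) i')) *
        ∏ j : Fin (r - k), jacobiθ τ (∑ t, (m j t : ℂ) * Function.update Q i (Q i + 1) t) ≠ 0)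
    (hdenτ : (∏ i' : Fin k, jacobiθ τ (Function.update Q i (Q i + τ) i')) *
        ∏ j : Fin (r - k), jacobiθ τ (∑ t, (m j t : ℂ) * Function.update Q i (Q i + τ) t) ≠ 0) :
    F (Function.update Q i (Q i + 1)) = F Q ∧
    F (Function.update Q i (Q i + τ)) = F Q :=
  ellipticity_of_witten_integrand_general τ hτ k r s d m i hcross hsq F hF Q

end
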